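/- arXiv:1905.08436 — 5 statements merged into one kernel-verified Lean document; each statement's English description precedes it below -/
import Mathlib

section
/- Let A be a unital C*-algebra generated by a self-adjoint subspace S containing 1, and let μ, ν : A → Mₖ be unital completely positive maps. If μ(bⁿ) = ν(bⁿ) for every n ∈ ℕ, every m ∈ ℕ, and every self-adjoint b ∈ Mₘ(S) (with μ, ν amplified entrywise), then μ = ν. In particular, for self-adjoint a₁,…,aₙ ∈ S, the value μ(a₁a₂⋯aₙ) is determined by the values of μ on powers of self-adjoint matrices over S, via the trick of placing a₁,…,aₙ on the off-diagonals of a selfadjoint (n+1)×(n+1) matrix b over S, whose n-th power has a₁⋯aₙ as its (1, n+1) entry. -/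
/-!
Put self-adjoint `a₁, …, aₙ ∈ S` on the two off-diagonals of an `(n+1) × (n+1)` matrix `b`; a
path of length `n` from the first to the last index must step up each time, so
`(bⁿ)₀ₙ = a₁ ⋯ aₙ`. Hence `μ` and `ν` agree on all products of self-adjoint elements of `S`.
As `S` is star-closed, every element of `S` is `ℜ a + i ℑ a` with `ℜ a, ℑ a ∈ S`, so these
products span the *-algebra generated by `S`, which is dense; continuity finishes the proof.
-/

noncomputable section

/-- A linear map from a C*-algebra into `k × k` complex matrices is completely
positive if each of its amplifications maps positive matrices over `A` to
positive matrices (positivity being witnessed by factorizations `star y * y`). -/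
def IsCompletelyPositive {A : Type*} [NormedRing A] [StarRing A] [CStarRing A]
    [NormedAlgebra ℂ A] [StarModule ℂ A] [CompleteSpace A] {k : ℕ}
    (μ : A →L[ℂ] Matrix (Fin k) (Fin k) ℂ) : Prop :=
  ∀ (m : ℕ) (x : Matrix (Fin m) (Fin m) A), (∃ y : Matrix (Fin m) (Fin m) A, x = star y * y) →
    ∃ c : Matrix (Fin m) (Fin m) (Matrix (Fin k) (Fin k) ℂ),
      x.map μ = star c * c

theorem List.getD_mem_or_eq_default {α : Type*} (l : List α) (n : ℕ) (d : α) :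
    l.getD n d ∈ l ∨ l.getD n d = d := by
  rcases lt_or_ge n l.length with hn | hn
  · exact .inl (List.getD_eq_getElem _ _ hn ▸ List.getElem_mem hn)
  · exact .inr (List.getD_eq_default _ _ hn)

section Tridiagonal

variable {A : Type*} [Semiring A]

def tridiagOfList (l : List A) : Matrix (Fin (l.length + 1)) (Fin (l.length + 1)) A :=
  Matrix.of fun i j =>
    if i.val + 1 = j.val then l.getD i 0 else if j.val + 1 = i.val then l.getD j 0 else 0

theorem tridiagOfList_apply (l : List A) (i j : Fin (l.length + 1)) :
    tridiagOfList l i j =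
      if i.val + 1 = j.val then l.getD i 0 else if j.val + 1 = i.val then l.getD j 0 else 0 :=
  rfl

theorem tridiagOfList_apply_eq_zero {l : List A} {i j : Fin (l.length + 1)}
    (h : i.val + 1 ≠ j.val) (h' : j.val + 1 ≠ i.val) : tridiagOfList l i j = 0 := by
  rw [tridiagOfList_apply, if_neg h, if_neg h']

theorem tridiagOfList_mem {σ : Type*} [SetLike σ A] [ZeroMemClass σ A] {S : σ} {l : List A}
    (hl : ∀ a ∈ l, a ∈ S) (i j : Fin (l.length + 1)) : tridiagOfList l i j ∈ S := by
  have hget (n : ℕ) : l.getD n 0 ∈ S :=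
    (l.getD_mem_or_eq_default n 0).elim (hl _) fun h => h.symm ▸ zero_mem S
  rw [tridiagOfList_apply]
  split_ifs
  exacts [hget _, hget _, zero_mem S]

theorem isSelfAdjoint_tridiagOfList [StarRing A] {l : List A} (hl : ∀ a ∈ l, IsSelfAdjoint a) :
    IsSelfAdjoint (tridiagOfList l) := by
  have hget (n : ℕ) : IsSelfAdjoint (l.getD n 0) :=
    (l.getD_mem_or_eq_default n 0).elim (hl _) fun h => h.symm ▸ .zero A
  ext i j
  rw [Matrix.star_apply, tridiagOfList_apply, tridiagOfList_apply]
  split_ifs <;> first | omega | exact (hget _).star_eq | exact star_zero A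

theorem tridiagOfList_pow_apply_of_lt (l : List A) {m : ℕ} {j : Fin (l.length + 1)}
    (h : m < j.val) : (tridiagOfList l ^ m) 0 j = 0 := by
  induction m generalizing j with
  | zero => exact Matrix.one_apply_ne (Fin.ne_of_val_ne (by simp; omega))
  | succ m ih =>
    rw [pow_succ, Matrix.mul_apply]
    refine Finset.sum_eq_zero fun x _ => ?_
    rcases lt_or_ge m x.val with hx | hx
    · rw [ih hx, zero_mul]
    · rw [tridiagOfList_apply_eq_zero (by omega) (by omega), mul_zero]

theorem tridiagOfList_pow_apply_self (l : List A) {m : ℕ} (hm : m ≤ l.length) :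
    (tridiagOfList l ^ m) 0 ⟨m, Nat.lt_succ_of_le hm⟩ = (l.take m).prod := by
  induction m with
  | zero => simp
  | succ m ih =>
    rw [pow_succ, Matrix.mul_apply, Finset.sum_eq_single ⟨m, by omega⟩, ih (by omega),
      List.prod_take_succ _ _ hm, tridiagOfList_apply, if_pos rfl, List.getD_eq_getElem]
    · intro x _ hx
      rcases lt_or_gt_of_ne (Fin.val_ne_of_ne hx) with hlt | hgt
      · rw [tridiagOfList_apply_eq_zero (by dsimp at hlt ⊢; omega) (by dsimp at hlt ⊢; omega),
          mul_zero]
      · rw [tridiagOfList_pow_apply_of_lt l hgt, zero_mul]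
    · simp

theorem tridiagOfList_pow_length_apply (l : List A) :
    (tridiagOfList l ^ l.length) 0 (Fin.last l.length) = l.prod := by
  rw [Fin.last, tridiagOfList_pow_apply_self l le_rfl, List.take_length]

end Tridiagonal

open ComplexStarModule in
theorem StarAlgebra.adjoin_eq_adjoin_setOf_isSelfAdjoint {A : Type*} [Ring A] [StarRing A]
    [Algebra ℂ A] [StarModule ℂ A] {S : Submodule ℂ A} (hS : ∀ a ∈ S, star a ∈ S) :
    adjoin ℂ (S : Set A) = adjoin ℂ {a | a ∈ S ∧ IsSelfAdjoint a} := by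
  refine le_antisymm (adjoin_le fun a ha => ?_) (adjoin_mono fun a ha => ha.1)
  have hre (b : A) (hb : b ∈ S) : (ℜ b : A) ∈ adjoin ℂ {a | a ∈ S ∧ IsSelfAdjoint a} :=
    subset_adjoin ℂ _
      ⟨realPart_apply_coe b ▸ S.smul_of_tower_mem _ (S.add_mem hb (hS b hb)), (ℜ b).prop⟩
  have him : (ℑ a : A) = ℜ (-Complex.I • a) := by simp [imaginaryPart]
  rw [← realPart_add_I_smul_imaginaryPart a, him]
  exact add_mem (hre a ha) (Subalgebra.smul_mem _ (hre _ (S.smul_mem _ ha)) _)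

theorem StarAlgebra.adjoin_toSubmodule_eq_span_closure {R A : Type*} [CommSemiring R]
    [StarRing R] [Semiring A] [Algebra R A] [StarRing A] [StarModule R A] {T : Set A}
    (hT : ∀ a ∈ T, IsSelfAdjoint a) :
    Subalgebra.toSubmodule (adjoin R T).toSubalgebra = Submodule.span R (Submonoid.closure T) := by
  have hstarT : star T ⊆ T := fun a (ha : star a ∈ T) => by
    rwa [← (IsSelfAdjoint.star_iff.mp (hT _ ha)).star_eq]
  rw [adjoin_eq_span, Set.union_eq_left.mpr hstarT]

theorem apply_list_prod_eq_of_map_pow_eq {A B σ : Type*} [Semiring A] [StarRing A]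
    [SetLike σ A] [ZeroMemClass σ A] {S : σ} {f g : A → B}
    (h : ∀ (m n : ℕ) (b : Matrix (Fin m) (Fin m) A),
      (∀ i j, b i j ∈ S) → star b = b → (b ^ n).map f = (b ^ n).map g)
    {l : List A} (hl : ∀ a ∈ l, a ∈ S ∧ IsSelfAdjoint a) : f l.prod = g l.prod := by
  have hpow := h _ l.length (tridiagOfList l) (tridiagOfList_mem fun a ha => (hl a ha).1)
    (isSelfAdjoint_tridiagOfList fun a ha => (hl a ha).2)
  simpa only [Matrix.map_apply, tridiagOfList_pow_length_apply] using
    congrFun (congrFun hpow 0) (Fin.last _)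

theorem ucp_maps_agreeing_on_powers_of_selfadjoint_matrices_are_equal_general
    {A : Type*} [NormedRing A] [StarRing A] [CStarRing A]
    [NormedAlgebra ℂ A] [StarModule ℂ A] [CompleteSpace A]
    (S : Submodule ℂ A) (hstar : ∀ a ∈ S, star a ∈ S)
    (hgen : (StarAlgebra.adjoin ℂ (S : Set A)).topologicalClosure = ⊤)
    {k : ℕ} (μ ν : A →L[ℂ] Matrix (Fin k) (Fin k) ℂ)
    (h : ∀ (m n : ℕ) (b : Matrix (Fin m) (Fin m) A),
      (∀ i j, b i j ∈ S) → star b = b →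
      (b ^ n).map μ = (b ^ n).map ν) :
    μ = ν := by
  set T : Set A := {a | a ∈ S ∧ IsSelfAdjoint a}
  have hdense : Dense (Submodule.span ℂ (Submonoid.closure T : Set A) : Set A) := by
    rw [← StarAlgebra.adjoin_toSubmodule_eq_span_closure fun a ha => ha.2,
      ← StarAlgebra.adjoin_eq_adjoin_setOf_isSelfAdjoint hstar, Subalgebra.coe_toSubmodule,
      StarSubalgebra.coe_toSubalgebra, dense_iff_closure_eq,
      ← StarSubalgebra.topologicalClosure_coe, hgen, StarSubalgebra.coe_top]
  refine ContinuousLinearMap.ext_on hdense fun x hx => ?_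
  obtain ⟨l, hl, rfl⟩ := Submonoid.exists_list_of_mem_closure hx
  exact apply_list_prod_eq_of_map_pow_eq h hl

/-- Let `A` be a unital C*-algebra generated by a unital
self-adjoint subspace `S`, and let `μ, ν : A → Mₖ` be unital completely positive
maps.  If `μ(bⁿ) = ν(bⁿ)` (entrywise amplification) for every `n`, every `m`, and
every self-adjoint `b ∈ Mₘ(S)`, then `μ = ν`. -/
theorem ucp_maps_agreeing_on_powers_of_selfadjoint_matrices_are_equal
    {A : Type*} [NormedRing A] [StarRing A] [CStarRing A]
    [NormedAlgebra ℂ A] [StarModule ℂ A] [CompleteSpace A]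
    (S : Submodule ℂ A) (hone : (1 : A) ∈ S) (hstar : ∀ a ∈ S, star a ∈ S)
    (hgen : (StarAlgebra.adjoin ℂ (S : Set A)).topologicalClosure = ⊤)
    {k : ℕ} (μ ν : A →L[ℂ] Matrix (Fin k) (Fin k) ℂ)
    (hμ1 : μ 1 = 1) (hν1 : ν 1 = 1)
    (hμcp : IsCompletelyPositive μ) (hνcp : IsCompletelyPositive ν)
    (h : ∀ (m n : ℕ) (b : Matrix (Fin m) (Fin m) A),
      (∀ i j, b i j ∈ S) → star b = b →
      (b ^ n).map μ = (b ^ n).map ν) :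
    μ = ν :=
  ucp_maps_agreeing_on_powers_of_selfadjoint_matrices_are_equal_general S hstar hgen μ ν h

end
end

section
/- Let H, K be Hilbert spaces, ν : H → K an isometry, and g a self-adjoint operator on K with ‖g‖ ≤ M. For β a self-adjoint operator on H with ν* g ν ≤ β and ε > 0, define the operator α_ε on K by α_ε = ν(β + ε)ν* + (1 − νν*)(ε⁻¹M² + M). Then α_ε ≥ g. (Equivalently, in 2×2 block form with respect to Ran(ν): if g = [[g₁₁, g₁₂],[g₂₁, g₂₂]] with g₁₁ ≤ β and ‖g‖ ≤ M, then [[β + ε, 0],[0, ε⁻¹M² + M]] ≥ g.) -/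
/-! With `P = ν ν*`, the operator `α_ε - g` splits as `ν (β - ν* g ν) ν*`, positive by
hypothesis, plus `P g P + ε P + (ε⁻¹ M² + M) (1 - P) - g`. Writing `x = P x + (1 - P) x`, the
cross terms of `⟪g x, x⟫` are at most `2 M ‖P x‖ ‖(1 - P) x‖ ≤ ε ‖P x‖² + ε⁻¹ M² ‖(1 - P) x‖²`
and the corner term at most `M ‖(1 - P) x‖²`, so the second summand is positive as well. -/

open ContinuousLinearMap RCLike
open scoped InnerProductSpace

noncomputable section

namespace ContinuousLinearMap

variable {𝕜 E F : Type*} [RCLike 𝕜] [NormedAddCommGroup E] [InnerProductSpace 𝕜 E]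
  [NormedAddCommGroup F] [InnerProductSpace 𝕜 F]

lemma re_inner_apply_le_of_opNorm_le {T : E →L[𝕜] E} {M : ℝ} (hTM : ‖T‖ ≤ M) (x y : E) :
    re ⟪T x, y⟫_𝕜 ≤ M * ‖x‖ * ‖y‖ :=
  calc re ⟪T x, y⟫_𝕜 ≤ ‖T x‖ * ‖y‖ := re_inner_le_norm _ _
    _ ≤ M * ‖x‖ * ‖y‖ := by gcongr; exact T.le_of_opNorm_le hTM x

variable [CompleteSpace E] [CompleteSpace F]

lemma _root_.IsSelfAdjoint.inner_apply_left {A : E →L[𝕜] E} (hA : IsSelfAdjoint A) (x y : E) :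
    ⟪A x, y⟫_𝕜 = ⟪x, A y⟫_𝕜 :=
  hA.isSymmetric x y

lemma re_inner_map_add_self {g : E →L[𝕜] E} (hg : IsSelfAdjoint g) (v y : E) :
    re ⟪g (v + y), v + y⟫_𝕜 = re ⟪g v, v⟫_𝕜 + 2 * re ⟪g v, y⟫_𝕜 + re ⟪g y, y⟫_𝕜 := by
  have hsymm : re ⟪g y, v⟫_𝕜 = re ⟪g v, y⟫_𝕜 := by
    rw [hg.inner_apply_left, inner_re_symm]
  simp only [map_add, inner_add_left, inner_add_right, hsymm]
  ring

theorem re_inner_map_add_self_le {g : E →L[𝕜] E} (hg : IsSelfAdjoint g) {M ε : ℝ} (hgM : ‖g‖ ≤ M)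
    (hε : 0 < ε) (v y : E) :
    re ⟪g (v + y), v + y⟫_𝕜 ≤ re ⟪g v, v⟫_𝕜 + ε * ‖v‖ ^ 2 + (ε⁻¹ * M ^ 2 + M) * ‖y‖ ^ 2 := by
  have hcross := re_inner_apply_le_of_opNorm_le hgM v y
  have hcorner := re_inner_apply_le_of_opNorm_le hgM y y
  have hyoung := two_mul_le_add_mul_sq (a := ‖v‖) (b := M * ‖y‖) hε
  rw [re_inner_map_add_self hg]
  linear_combination 2 * hcross + hcorner + hyoung

lemma inner_apply_self_eq_norm_sq_of_isStarProjection {P : E →L[𝕜] E} (hP : IsStarProjection P)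
    (x : E) : ⟪P x, x⟫_𝕜 = (‖P x‖ ^ 2 : 𝕜) := by
  calc ⟪P x, x⟫_𝕜 = ⟪P (P x), x⟫_𝕜 := by rw [← mul_apply_eq_comp, hP.isIdempotentElem.eq]
    _ = ⟪P x, P x⟫_𝕜 := hP.isSelfAdjoint.inner_apply_left _ _
    _ = (‖P x‖ ^ 2 : 𝕜) := inner_self_eq_norm_sq_to_K _

lemma isStarProjection_comp_adjoint {ν : E →L[𝕜] F} (hν : adjoint ν ∘L ν = 1) :
    IsStarProjection (ν ∘L adjoint ν) where
  isIdempotentElem := by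
    rw [IsIdempotentElem, mul_def, comp_assoc, ← comp_assoc (adjoint ν), hν, one_def, id_comp]
  isSelfAdjoint := (isPositive_self_comp_adjoint ν).isSelfAdjoint

theorem le_compression_add_smul_add_smul_one_sub {P g : E →L[𝕜] E} (hP : IsStarProjection P)
    (hg : IsSelfAdjoint g) {M ε : ℝ} (hgM : ‖g‖ ≤ M) (hε : 0 < ε) :
    g ≤ P ∘L g ∘L P + (ε : 𝕜) • P + ((ε⁻¹ * M ^ 2 + M : ℝ) : 𝕜) • (1 - P) := by
  set c := ε⁻¹ * M ^ 2 + M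
  have hQ := hP.one_sub
  have hreal (r : ℝ) : IsSelfAdjoint (r : 𝕜) := conj_ofReal r
  rw [le_def, isPositive_def']
  refine ⟨?_, fun x => ?_⟩
  · have hcompr : IsSelfAdjoint (P ∘L g ∘L P) := by
      simpa [hP.isSelfAdjoint.adjoint_eq] using hg.conj_adjoint P
    exact ((hcompr.add ((hreal ε).smul hP.isSelfAdjoint)).add
      ((hreal _).smul hQ.isSelfAdjoint)).sub hg
  · have hform : re ⟪(P ∘L g ∘L P + (ε : 𝕜) • P + (c : 𝕜) • (1 - P) - g) x, x⟫_𝕜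
        = re ⟪g (P x), P x⟫_𝕜 + ε * ‖P x‖ ^ 2 + c * ‖(1 - P) x‖ ^ 2 - re ⟪g x, x⟫_𝕜 := by
      rw [sub_apply, add_apply, add_apply, smul_apply, smul_apply, comp_apply, comp_apply,
        inner_sub_left, inner_add_left, inner_add_left, inner_smul_left, inner_smul_left,
        hP.isSelfAdjoint.inner_apply_left, inner_apply_self_eq_norm_sq_of_isStarProjection hP,
        inner_apply_self_eq_norm_sq_of_isStarProjection hQ]
      simp only [conj_ofReal, map_add, map_sub, ← ofReal_pow, re_ofReal_mul, ofReal_re]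
    have hdecomp := re_inner_map_add_self_le hg hgM hε (P x) ((1 - P) x)
    rw [show P x + (1 - P) x = x by simp] at hdecomp
    rw [reApplyInnerSelf_apply, hform]
    linarith

end ContinuousLinearMap

theorem compression_schur_complement_estimate_general
    {H K : Type*} [NormedAddCommGroup H] [InnerProductSpace ℂ H] [CompleteSpace H]
    [NormedAddCommGroup K] [InnerProductSpace ℂ K] [CompleteSpace K]
    (ν : H →L[ℂ] K) (hν : (adjoint ν) ∘L ν = 1)
    (g : K →L[ℂ] K) (hg : IsSelfAdjoint g) (M : ℝ) (hgM : ‖g‖ ≤ M)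
    (β : H →L[ℂ] H)
    (hdom : (β - (adjoint ν) ∘L g ∘L ν).IsPositive)
    (ε : ℝ) (hε : 0 < ε) :
    ((ν ∘L (β + (ε : ℂ) • 1) ∘L (adjoint ν) +
        ((ε⁻¹ * M ^ 2 + M : ℝ) : ℂ) • (1 - ν ∘L (adjoint ν))) - g).IsPositive := by
  set P := ν ∘L adjoint ν
  have hsplit : ν ∘L (β + (ε : ℂ) • 1) ∘L adjoint ν +
        ((ε⁻¹ * M ^ 2 + M : ℝ) : ℂ) • (1 - P) - g =
      ν ∘L (β - adjoint ν ∘L g ∘L ν) ∘L adjoint ν +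
        (P ∘L g ∘L P + (ε : ℂ) • P + ((ε⁻¹ * M ^ 2 + M : ℝ) : ℂ) • (1 - P) - g) := by
    simp only [P, add_comp, sub_comp, comp_add, comp_sub, smul_comp, comp_smul, one_def, id_comp,
      comp_assoc]
    abel
  rw [hsplit]
  exact (hdom.conj_adjoint ν).add <| (le_def _ _).mp <|
    le_compression_add_smul_add_smul_one_sub (isStarProjection_comp_adjoint hν) hg hgM hε

/-- Let `H`, `K` be Hilbert spaces, `ν : H → K` an isometry,
and `g` a self-adjoint operator on `K` with `‖g‖ ≤ M`.  For `β` a self-adjoint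
operator on `H` with `ν* g ν ≤ β` and `ε > 0`, the operator
`α_ε = ν (β + ε) ν* + (ε⁻¹ M² + M)(1 − ν ν*)` on `K` dominates `g`:
`g ≤ α_ε` in the operator order. -/
theorem compression_schur_complement_estimate
    {H K : Type*} [NormedAddCommGroup H] [InnerProductSpace ℂ H] [CompleteSpace H]
    [NormedAddCommGroup K] [InnerProductSpace ℂ K] [CompleteSpace K]
    (ν : H →L[ℂ] K) (hν : (adjoint ν) ∘L ν = 1)
    (g : K →L[ℂ] K) (hg : IsSelfAdjoint g) (M : ℝ) (hgM : ‖g‖ ≤ M)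
    (β : H →L[ℂ] H) (hβ : IsSelfAdjoint β)
    (hdom : (β - (adjoint ν) ∘L g ∘L ν).IsPositive)
    (ε : ℝ) (hε : 0 < ε) :
    ((ν ∘L (β + (ε : ℂ) • 1) ∘L (adjoint ν) +
        ((ε⁻¹ * M ^ 2 + M : ℝ) : ℂ) • (1 - ν ∘L (adjoint ν))) - g).IsPositive :=
  compression_schur_complement_estimate_general ν hν g hg M hgM β hdom ε hε

end
end

section
/- Let A be a unital C*-algebra and x : A → Mₙ an irreducible representation. Suppose x, viewed as a point of the nc state space, is written as a finite nc convex combination x = ∑ᵢ αᵢ* xᵢ αᵢ where each xᵢ : A → M_{nᵢ} is unital completely positive and ∑ αᵢ* αᵢ = 1ₙ with each αᵢ ≠ 0. Then each αᵢ is a positive scalar multiple of an isometry βᵢ ∈ M_{nᵢ,n} with βᵢ* xᵢ(a) βᵢ = x(a) for all a ∈ A. -/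
/-!
Kadison–Schwarz for a unital completely positive `xᵢ` gives
`‖xᵢ(a)η‖² ≤ re ⟪xᵢ(a*a)η, η⟫`. Taking `η = αᵢ v` and summing over the decomposition
`x = ∑ αᵢ* xᵢ αᵢ` bounds `∑ ‖xᵢ(a)αᵢv‖²` by `‖x(a)v‖²`, while
`re ∑ ⟪xᵢ(a)αᵢv, αᵢx(a)v⟫ = ‖x(a)v‖² = ∑ ‖αᵢx(a)v‖²`; expanding
`∑ ‖xᵢ(a)αᵢv - αᵢx(a)v‖² ≤ 0` gives `xᵢ(a)αᵢ = αᵢx(a)`. Since `xᵢ` is `*`-preserving,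
`αᵢ*αᵢ` then commutes with the irreducible `x(A)`, so by Schur it is a scalar `cᵢ² > 0`,
and `βᵢ = cᵢ⁻¹αᵢ` is an isometry with `βᵢ* xᵢ(a) βᵢ = βᵢ*βᵢ x(a) = x(a)`.
-/

open ContinuousLinearMap

noncomputable section

/-- Complete positivity for a linear map from a C*-algebra into the bounded
operators on a finite-dimensional Hilbert space, positivity being witnessed by
factorizations `star y * y`. -/
def IsCPinto {A : Type*} [NormedRing A] [StarRing A] [CStarRing A]
    [NormedAlgebra ℂ A] [StarModule ℂ A] [CompleteSpace A]
    {H : Type*} [NormedAddCommGroup H] [InnerProductSpace ℂ H] [CompleteSpace H]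
    (τ : A →ₗ[ℂ] (H →L[ℂ] H)) : Prop :=
  ∀ (k : ℕ) (x : Matrix (Fin k) (Fin k) A),
    (∃ y : Matrix (Fin k) (Fin k) A, x = star y * y) →
    ∃ c : Matrix (Fin k) (Fin k) (H →L[ℂ] H), x.map τ = star c * c

open scoped InnerProductSpace

section HilbertFamilies

variable {ι : Type*} [Fintype ι] {K : ι → Type*} [∀ j, NormedAddCommGroup (K j)]
  [∀ j, InnerProductSpace ℂ (K j)]

theorem eq_of_sum_norm_sq_le_of_re_sum_inner_eq (u v : ∀ j, K j) {r : ℝ}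
    (hu : ∑ j, ‖u j‖ ^ 2 ≤ r) (hv : ∑ j, ‖v j‖ ^ 2 = r)
    (huv : (∑ j, ⟪u j, v j⟫_ℂ).re = r) : u = v := by
  have hsum : ∑ j, ‖u j - v j‖ ^ 2 ≤ 0 := by
    simp only [norm_sub_sq (𝕜 := ℂ), Finset.sum_add_distrib, Finset.sum_sub_distrib,
      ← Finset.mul_sum, RCLike.re_to_complex, ← Complex.re_sum]
    linarith
  funext j
  have hzero := (Finset.sum_eq_zero_iff_of_nonneg fun j _ => sq_nonneg ‖u j - v j‖).mp
    (hsum.antisymm (Finset.sum_nonneg fun j _ => sq_nonneg _)) j (Finset.mem_univ j)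
  simpa [sub_eq_zero] using hzero

variable {H : Type*} [NormedAddCommGroup H] [InnerProductSpace ℂ H] [CompleteSpace H]
  [∀ j, CompleteSpace (K j)]

theorem inner_sum_adjoint_apply (α : ∀ j, H →L[ℂ] K j) (u : ∀ j, K j) (w : H) :
    ⟪∑ j, adjoint (α j) (u j), w⟫_ℂ = ∑ j, ⟪u j, α j w⟫_ℂ := by
  simp only [sum_inner, adjoint_inner_left]

theorem sum_norm_sq_apply_of_sum_adjoint_comp_self_eq_one (α : ∀ j, H →L[ℂ] K j)
    (hsum : ∑ j, adjoint (α j) ∘L α j = 1) (w : H) : ∑ j, ‖α j w‖ ^ 2 = ‖w‖ ^ 2 := by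
  have h := congrArg (fun T => (⟪T w, w⟫_ℂ).re) hsum
  simp only [sum_apply, comp_apply, inner_sum_adjoint_apply] at h
  simpa [Complex.re_sum, ← inner_self_eq_norm_sq (𝕜 := ℂ)] using h

end HilbertFamilies

section Schur

variable {H : Type*} [NormedAddCommGroup H] [NormedSpace ℂ H] [FiniteDimensional ℂ H]

theorem exists_eq_smul_one_of_forall_commute {ι : Type*} (ρ : ι → H →L[ℂ] H)
    (hirr : ∀ U : Submodule ℂ H, (∀ i, ∀ v ∈ U, ρ i v ∈ U) → U = ⊥ ∨ U = ⊤)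
    (T : H →L[ℂ] H) (hT : ∀ i, Commute (ρ i) T) : ∃ μ : ℂ, T = μ • 1 := by
  cases subsingleton_or_nontrivial H
  · exact ⟨0, Subsingleton.elim _ _⟩
  obtain ⟨μ, hμ⟩ := Module.End.exists_eigenvalue (T : H →ₗ[ℂ] H)
  have hinv : ∀ i, ∀ v ∈ Module.End.eigenspace (T : H →ₗ[ℂ] H) μ,
      ρ i v ∈ Module.End.eigenspace (T : H →ₗ[ℂ] H) μ := by
    intro i v hv
    rw [Module.End.mem_eigenspace_iff] at hv ⊢
    calc T (ρ i v) = ρ i (T v) := (DFunLike.congr_fun (hT i).eq v).symm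
      _ = μ • ρ i v := by rw [← coe_coe T, hv, map_smul]
  refine ⟨μ, ext fun v => ?_⟩
  have hv : v ∈ Module.End.eigenspace (T : H →ₗ[ℂ] H) μ := by
    rw [(hirr _ hinv).resolve_left hμ]; trivial
  simpa using Module.End.mem_eigenspace_iff.mp hv

end Schur

section Operators

variable {H K : Type*} [NormedAddCommGroup H] [InnerProductSpace ℂ H] [CompleteSpace H]
  [NormedAddCommGroup K] [InnerProductSpace ℂ K] [CompleteSpace K]

theorem exists_pos_smul_isometry_of_adjoint_comp_self_eq_smul_one {α : H →L[ℂ] K}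
    (hα : α ≠ 0) {μ : ℂ} (hμ : adjoint α ∘L α = μ • 1) :
    ∃ (c : ℝ) (β : H →L[ℂ] K), 0 < c ∧ adjoint β ∘L β = 1 ∧ α = (c : ℂ) • β := by
  obtain ⟨v, hv⟩ : ∃ v, α v ≠ 0 := by
    by_contra! h
    exact hα (ext h)
  have hv0 : v ≠ 0 := by rintro rfl; simp at hv
  set c : ℝ := ‖α v‖ / ‖v‖
  have hc : 0 < c := div_pos (norm_pos_iff.mpr hv) (norm_pos_iff.mpr hv0)
  have hμc : μ = (c : ℂ) ^ 2 := by
    have h := congrArg (fun T => ⟪v, T v⟫_ℂ) hμ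
    simp only [comp_apply, adjoint_inner_right, smul_apply, one_apply_eq_self, inner_smul_right,
      inner_self_eq_norm_sq_to_K, RCLike.ofReal_eq_complex_ofReal] at h
    have hv0' : (‖v‖ : ℂ) ^ 2 ≠ 0 := by simpa using hv0
    rw [(eq_div_iff hv0').mpr h.symm]
    push_cast [c]
    ring
  refine ⟨c, ((c⁻¹ : ℝ) : ℂ) • α, hc, ?_, ?_⟩
  · rw [map_smulₛₗ adjoint, Complex.conj_ofReal, smul_comp, comp_smul, hμ, smul_smul,
      smul_smul, hμc, ← Complex.ofReal_mul, ← Complex.ofReal_pow, ← Complex.ofReal_mul,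
      show c⁻¹ * c⁻¹ * c ^ 2 = 1 by field_simp, Complex.ofReal_one, one_smul]
  · rw [smul_smul, ← Complex.ofReal_mul, mul_inv_cancel₀ hc.ne', Complex.ofReal_one, one_smul]

theorem re_sum_inner_star_mul_self_apply_nonneg {ι : Type*} [Fintype ι]
    (c : Matrix ι ι (H →L[ℂ] H)) (v : ι → H) :
    0 ≤ (∑ p, ∑ q, ⟪(star c * c) p q (v q), v p⟫_ℂ).re := by
  have key : ∑ p, ∑ q, ⟪(star c * c) p q (v q), v p⟫_ℂ
      = ∑ r, ⟪∑ q, c r q (v q), ∑ p, c r p (v p)⟫_ℂ := by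
    calc ∑ p, ∑ q, ⟪(star c * c) p q (v q), v p⟫_ℂ
        = ∑ p, ∑ q, ∑ r, ⟪c r q (v q), c r p (v p)⟫_ℂ := by
          simp only [Matrix.mul_apply, Matrix.star_apply, star_eq_adjoint, sum_apply,
            mul_apply_eq_comp, sum_inner, adjoint_inner_left]
      _ = ∑ r, ∑ p, ∑ q, ⟪c r q (v q), c r p (v p)⟫_ℂ :=
          (Finset.sum_congr rfl fun p _ => Finset.sum_comm).trans Finset.sum_comm
      _ = ∑ r, ⟪∑ q, c r q (v q), ∑ p, c r p (v p)⟫_ℂ := by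
          simp only [inner_sum, sum_inner]
  rw [key, Complex.re_sum]
  exact Finset.sum_nonneg fun r _ => inner_self_nonneg (𝕜 := ℂ)

end Operators

theorem matrix_one_star_mul_self_eq_star_mul_self {R : Type*} [Semiring R] [StarRing R]
    (a : R) :
    (!![1, a; star a, star a * a] : Matrix (Fin 2) (Fin 2) R)
      = star !![1, a; 0, 0] * !![1, a; 0, 0] := by
  ext p q
  fin_cases p <;> fin_cases q <;>
    simp [Matrix.mul_apply, Fin.sum_univ_two, Matrix.star_apply]

section CompletelyPositive

variable {A : Type*} [NormedRing A] [StarRing A] [CStarRing A]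
    [NormedAlgebra ℂ A] [StarModule ℂ A] [CompleteSpace A]
    {H : Type*} [NormedAddCommGroup H] [InnerProductSpace ℂ H] [CompleteSpace H]

theorem IsCPinto.map_star {τ : A →ₗ[ℂ] (H →L[ℂ] H)} (hτ : IsCPinto τ) (a : A) :
    τ (star a) = star (τ a) := by
  obtain ⟨c, hc⟩ := hτ 2 _ ⟨_, matrix_one_star_mul_self_eq_star_mul_self a⟩
  have hsa : star ((!![1, a; star a, star a * a]).map τ)
      = (!![1, a; star a, star a * a]).map τ := by
    rw [hc, star_mul, star_star]
  have h : star (τ (star a)) = τ a := by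
    simpa [Matrix.star_apply] using congrFun (congrFun hsa 0) 1
  rw [← h, star_star]

theorem IsCPinto.norm_sq_le_re_inner {τ : A →ₗ[ℂ] (H →L[ℂ] H)} (hτ : IsCPinto τ)
    (hτ1 : τ 1 = 1) (a : A) (η : H) : ‖τ a η‖ ^ 2 ≤ (⟪τ (star a * a) η, η⟫_ℂ).re := by
  obtain ⟨c, hc⟩ := hτ 2 _ ⟨_, matrix_one_star_mul_self_eq_star_mul_self a⟩
  have h0 := re_sum_inner_star_mul_self_apply_nonneg c ![-(τ a η), η]
  rw [← hc] at h0
  have hexp : ∑ p, ∑ q, ⟪(!![1, a; star a, star a * a]).map τ p q (![-(τ a η), η] q),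
        ![-(τ a η), η] p⟫_ℂ
      = ⟪τ (star a * a) η, η⟫_ℂ - ⟪τ a η, τ a η⟫_ℂ := by
    simp [Fin.sum_univ_two, hτ1, hτ.map_star, star_eq_adjoint, adjoint_inner_left]
    ring
  have hnorm := inner_self_eq_norm_sq (𝕜 := ℂ) (τ a η)
  rw [RCLike.re_to_complex] at hnorm
  rw [hexp, Complex.sub_re] at h0
  linarith

theorem comp_eq_comp_of_eq_sum_compressions {ι : Type*} [Fintype ι] {K : ι → Type*}
    [∀ j, NormedAddCommGroup (K j)] [∀ j, InnerProductSpace ℂ (K j)] [∀ j, CompleteSpace (K j)]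
    (π : A →⋆ₐ[ℂ] (H →L[ℂ] H)) {τ : ∀ j, A →ₗ[ℂ] (K j →L[ℂ] K j)}
    (hτ1 : ∀ j, τ j 1 = 1) (hτ : ∀ j, IsCPinto (τ j)) {α : ∀ j, H →L[ℂ] K j}
    (hsum : ∑ j, adjoint (α j) ∘L α j = 1)
    (hπ : ∀ a, π a = ∑ j, adjoint (α j) ∘L τ j a ∘L α j) (a : A) (j : ι) :
    τ j a ∘L α j = α j ∘L π a := by
  have hπv : ∀ b v, π b v = ∑ j, adjoint (α j) (τ j b (α j v)) := by
    intro b v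
    simp [hπ b, sum_apply]
  ext v
  set w := π a v
  suffices h : (fun j => τ j a (α j v)) = fun j => α j w from congrFun h j
  refine eq_of_sum_norm_sq_le_of_re_sum_inner_eq _ _ (r := ‖w‖ ^ 2) ?_
    (sum_norm_sq_apply_of_sum_adjoint_comp_self_eq_one α hsum w) ?_
  · calc ∑ j, ‖τ j a (α j v)‖ ^ 2
        ≤ ∑ j, (⟪τ j (star a * a) (α j v), α j v⟫_ℂ).re :=
          Finset.sum_le_sum fun j _ => (hτ j).norm_sq_le_re_inner (hτ1 j) a _
      _ = (⟪π (star a * a) v, v⟫_ℂ).re := by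
          rw [hπv, inner_sum_adjoint_apply, Complex.re_sum]
      _ = ‖w‖ ^ 2 := by
          rw [map_mul, map_star, mul_apply_eq_comp, star_eq_adjoint,
            adjoint_inner_left, ← RCLike.re_to_complex, inner_self_eq_norm_sq]
  · rw [← inner_sum_adjoint_apply, ← hπv, ← RCLike.re_to_complex, inner_self_eq_norm_sq]

theorem commute_adjoint_comp_self_of_comp_eq_comp {K : Type*} [NormedAddCommGroup K]
    [InnerProductSpace ℂ K] [CompleteSpace K] (π : A →⋆ₐ[ℂ] (H →L[ℂ] H))
    {τ : A →ₗ[ℂ] (K →L[ℂ] K)} (hτ : IsCPinto τ) {α : H →L[ℂ] K}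
    (hα : ∀ a, τ a ∘L α = α ∘L π a) (a : A) : Commute (π a) (adjoint α ∘L α) := by
  have hadj : π a ∘L adjoint α = adjoint α ∘L τ a := by
    have h := congrArg adjoint (hα (star a))
    rw [adjoint_comp, adjoint_comp, ← star_eq_adjoint (τ _), ← star_eq_adjoint (π _),
      ← hτ.map_star, ← map_star π, star_star] at h
    exact h.symm
  change π a ∘L (adjoint α ∘L α) = (adjoint α ∘L α) ∘L π a
  rw [← comp_assoc, hadj, comp_assoc, hα, comp_assoc]

end CompletelyPositive

/-- Let `A` be a unital C*-algebra and `x : A → Mₙ` an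
irreducible representation.  If `x`, viewed as a point of the nc state space, is
written as a finite nc convex combination `x = ∑ αᵢ* xᵢ αᵢ` with each
`xᵢ : A → M_{nᵢ}` unital completely positive, `∑ αᵢ* αᵢ = 1ₙ` and each `αᵢ ≠ 0`,
then each `αᵢ` is a positive scalar multiple of an isometry `βᵢ` with
`βᵢ* xᵢ(a) βᵢ = x(a)` for all `a ∈ A`. -/
theorem irreducible_representation_is_pure
    {A : Type*} [NormedRing A] [StarRing A] [CStarRing A]
    [NormedAlgebra ℂ A] [StarModule ℂ A] [CompleteSpace A]
    {n : ℕ}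
    (x : A →⋆ₐ[ℂ] (EuclideanSpace ℂ (Fin n) →L[ℂ] EuclideanSpace ℂ (Fin n)))
    -- irreducibility: no nontrivial invariant subspaces
    (hirr : ∀ U : Submodule ℂ (EuclideanSpace ℂ (Fin n)),
      (∀ a : A, ∀ v ∈ U, x a v ∈ U) → U = ⊥ ∨ U = ⊤)
    (k : ℕ) (ns : Fin k → ℕ)
    (xs : ∀ i, A →ₗ[ℂ] (EuclideanSpace ℂ (Fin (ns i)) →L[ℂ] EuclideanSpace ℂ (Fin (ns i))))
    (hxs1 : ∀ i, xs i 1 = 1) (hxscp : ∀ i, IsCPinto (xs i))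
    (α : ∀ i, EuclideanSpace ℂ (Fin n) →L[ℂ] EuclideanSpace ℂ (Fin (ns i)))
    (hα0 : ∀ i, α i ≠ 0)
    (hsum : (∑ i, (adjoint (α i)) ∘L (α i)) = 1)
    (hcomb : ∀ a : A, x a = ∑ i, (adjoint (α i)) ∘L (xs i a) ∘L (α i)) :
    ∀ i, ∃ (c : ℝ) (β : EuclideanSpace ℂ (Fin n) →L[ℂ] EuclideanSpace ℂ (Fin (ns i))),
      0 < c ∧ (adjoint β) ∘L β = 1 ∧ α i = (c : ℂ) • β ∧
      ∀ a : A, (adjoint β) ∘L (xs i a) ∘L β = x a := by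
  intro i
  have hinter := comp_eq_comp_of_eq_sum_compressions x hxs1 hxscp hsum hcomb
  obtain ⟨μ, hμ⟩ := exists_eq_smul_one_of_forall_commute x hirr _
    (commute_adjoint_comp_self_of_comp_eq_comp x (hxscp i) (hinter · i))
  obtain ⟨c, β, hc, hβ, hαβ⟩ :=
    exists_pos_smul_isometry_of_adjoint_comp_self_eq_smul_one (hα0 i) hμ
  refine ⟨c, β, hc, hβ, hαβ, fun a => ?_⟩
  have hβx : xs i a ∘L β = β ∘L x a := by
    have h := hinter a i
    rw [hαβ, comp_smul, smul_comp] at h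
    exact smul_right_injective _ (by exact_mod_cast hc.ne') h
  rw [hβx, ← comp_assoc, hβ]
  exact one_mul (x a)

end
end

section
/- Let I ⊆ ℝ be a compact interval and let K be the nc convex set with Kₙ = {self-adjoint α ∈ Mₙ (or B(Hₙ)) with spectrum contained in I}. For a continuous real function f ∈ C(I), define f on K by the continuous functional calculus. Then the resulting nc function is convex in the nc sense (f(α* x α) ≤ α* f(x) α for all isometries α and x ∈ K, equivalently f(λx+(1−λ)y) ≤ λf(x)+(1−λ)f(y) at every level) if and only if f is operator convex on I. -/
open Matrix Polynomial
open scoped ComplexOrder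

noncomputable section

/-- The Loewner order on complex matrices: `A ≤ B` iff `B - A` is positive
semidefinite. -/
def loewnerLe {m : ℕ} (A B : Matrix (Fin m) (Fin m) ℂ) : Prop :=
  (B - A).PosSemidef

/-!
Both directions compare `f` on a matrix with `f` on its compressions, through one principle:
if `x α = α b` for Hermitian `x`, `b`, then `f(x) α = α f(b)`, because `f` agrees with a single
polynomial on both spectra.

Convex combinations are compressions of direct sums: `t x + (1 - t) y = Vᴴ (x ⊕ y) V` for the
isometry `V = [√t; √(1 - t)]`, and `f(x ⊕ y) = f(x) ⊕ f(y)`.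

Conversely, following Hansen and Pedersen, let `α` be an isometry and `u = 1 - 2 α αᴴ`, a
self-adjoint unitary with `u α = -α`. The pinching `y = (x + u x u) / 2` satisfies
`y α = α (αᴴ x α)`, so `f(αᴴ x α) = αᴴ f(y) α`, and midpoint convexity together with
`f(u x u) = u f(x) u` bounds this by `αᴴ (f(x) + u f(x) u) α / 2 = αᴴ f(x) α`.
-/

namespace Matrix

section Intertwining

variable {n p R S : Type*} [Fintype n] [DecidableEq n] [Fintype p] [DecidableEq p]
  [CommSemiring R] [CommSemiring S] [Algebra R S] {x : Matrix n n S} {b : Matrix p p S}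
  {α : Matrix n p S}

lemma pow_mul_eq_mul_pow_of_mul_eq (h : x * α = α * b) (k : ℕ) : x ^ k * α = α * b ^ k := by
  induction k with
  | zero => simp
  | succ k ih =>
    rw [pow_succ, pow_succ, Matrix.mul_assoc, h, ← Matrix.mul_assoc, ih, Matrix.mul_assoc]

lemma aeval_mul_eq_mul_aeval_of_mul_eq (h : x * α = α * b) (q : R[X]) :
    aeval x q * α = α * aeval b q := by
  induction q using Polynomial.induction_on' with
  | add q r hq hr => rw [map_add, map_add, Matrix.add_mul, Matrix.mul_add, hq, hr]
  | monomial k a =>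
    simp only [aeval_monomial, ← Algebra.smul_def, Matrix.smul_mul, Matrix.mul_smul,
      pow_mul_eq_mul_pow_of_mul_eq h]

end Intertwining

section FunctionalCalculus

variable {n p 𝕜 : Type*} [Fintype n] [Fintype p] [RCLike 𝕜]

lemma conjTranspose_reindex_mul_reindex_mul_reindex {q : Type*} (e : n ≃ p)
    (z : Matrix n n 𝕜) (α : Matrix n q 𝕜) :
    (reindex e (Equiv.refl q) α)ᴴ * reindex e e z * reindex e (Equiv.refl q) α = αᴴ * z * α := by
  simp

variable [DecidableEq n] [DecidableEq p]

lemma exists_cfc_eq_aeval_and_cfc_eq_aeval (f : ℝ → ℝ) {x : Matrix n n 𝕜} {b : Matrix p p 𝕜}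
    (hx : x.IsHermitian) (hb : b.IsHermitian) :
    ∃ q : ℝ[X], cfc f x = aeval x q ∧ cfc f b = aeval b q := by
  have hfin : (spectrum ℝ x ∪ spectrum ℝ b).Finite :=
    finite_real_spectrum.union finite_real_spectrum
  obtain ⟨q, hq⟩ : ∃ q : ℝ[X], ∀ r ∈ spectrum ℝ x ∪ spectrum ℝ b, q.eval r = f r :=
    ⟨Lagrange.interpolate hfin.toFinset id f, fun r hr => by
      simpa using Lagrange.eval_interpolate_at_node f (Set.injOn_id _) (by simpa using hr)⟩
  refine ⟨q, ?_, ?_⟩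
  · rw [← cfc_polynomial q x hx.isSelfAdjoint]
    exact cfc_congr fun r hr => (hq r (Or.inl hr)).symm
  · rw [← cfc_polynomial q b hb.isSelfAdjoint]
    exact cfc_congr fun r hr => (hq r (Or.inr hr)).symm

lemma cfc_mul_eq_mul_cfc_of_mul_eq (f : ℝ → ℝ) {x : Matrix n n 𝕜} {b : Matrix p p 𝕜}
    {α : Matrix n p 𝕜} (hx : x.IsHermitian) (hb : b.IsHermitian) (h : x * α = α * b) :
    cfc f x * α = α * cfc f b := by
  obtain ⟨q, hqx, hqb⟩ := exists_cfc_eq_aeval_and_cfc_eq_aeval f hx hb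
  rw [hqx, hqb, aeval_mul_eq_mul_aeval_of_mul_eq h]

lemma conjTranspose_mul_cfc_mul_of_mul_eq (f : ℝ → ℝ) {x : Matrix n n 𝕜} {b : Matrix p p 𝕜}
    {α : Matrix n p 𝕜} (hx : x.IsHermitian) (hb : b.IsHermitian) (hα : αᴴ * α = 1)
    (h : x * α = α * b) : αᴴ * cfc f x * α = cfc f b := by
  rw [Matrix.mul_assoc, cfc_mul_eq_mul_cfc_of_mul_eq f hx hb h, ← Matrix.mul_assoc, hα,
    Matrix.one_mul]

lemma cfc_fromBlocks_zero (f : ℝ → ℝ) {x : Matrix n n 𝕜} {y : Matrix p p 𝕜}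
    (hx : x.IsHermitian) (hy : y.IsHermitian) :
    cfc f (fromBlocks x 0 0 y) = fromBlocks (cfc f x) 0 0 (cfc f y) := by
  have hz : (fromBlocks x 0 0 y).IsHermitian := hx.fromBlocks (by simp) hy
  have h₁ := cfc_mul_eq_mul_cfc_of_mul_eq f hz hx (α := fromRows 1 0)
    (by simp [fromBlocks_mul_fromRows, fromRows_mul])
  have h₂ := cfc_mul_eq_mul_cfc_of_mul_eq f hz hy (α := fromRows 0 1)
    (by simp [fromBlocks_mul_fromRows, fromRows_mul])
  calc cfc f (fromBlocks x 0 0 y)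
      = cfc f (fromBlocks x 0 0 y) * fromCols (fromRows 1 0) (fromRows 0 1) := by
        rw [fromCols_fromRows_eq_fromBlocks, fromBlocks_one, Matrix.mul_one]
    _ = fromBlocks (cfc f x) 0 0 (cfc f y) := by
        rw [mul_fromCols, h₁, h₂, fromRows_mul, fromRows_mul, fromCols_fromRows_eq_fromBlocks]
        simp

lemma spectrum_fromBlocks_zero_subset {R A : Type*} [CommSemiring R] [CommRing A] [Algebra R A]
    (x : Matrix n n A) (y : Matrix p p A) :
    spectrum R (fromBlocks x 0 0 y) ⊆ spectrum R x ∪ spectrum R y := by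
  intro r hr
  contrapose! hr
  rw [Set.mem_union, not_or, spectrum.notMem_iff, spectrum.notMem_iff,
    isUnit_iff_isUnit_det, isUnit_iff_isUnit_det] at hr
  have hsub : algebraMap R _ r - fromBlocks x 0 0 y
      = fromBlocks (algebraMap R _ r - x) 0 0 (algebraMap R _ r - y) := by
    ext (i | i) (j | j) <;> simp [algebraMap_eq_diagonal, diagonal_apply]
  rw [spectrum.notMem_iff, hsub, isUnit_iff_isUnit_det, det_fromBlocks_zero₁₂]
  exact hr.1.mul hr.2

lemma cfc_reindex (f : ℝ → ℝ) (e : n ≃ p) {x : Matrix n n 𝕜} (hx : x.IsHermitian) :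
    cfc f (reindex e e x) = reindex e e (cfc f x) :=
  let φ := StarAlgEquiv.ofAlgEquiv (reindexAlgEquiv ℝ 𝕜 e)
    fun x => (conjTranspose_reindex e e x).symm
  (StarAlgHomClass.map_cfc φ f x (finite_real_spectrum.continuousOn f)
    (continuous_id.matrix_reindex e e) hx.isSelfAdjoint (hx.reindex e).isSelfAdjoint).symm

lemma spectrum_reindex (e : n ≃ p) (x : Matrix n n 𝕜) :
    spectrum ℝ (reindex e e x) = spectrum ℝ x :=
  AlgEquiv.spectrum_eq (reindexAlgEquiv ℝ 𝕜 e) x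

end FunctionalCalculus

section ConvexColumn

variable (n 𝕜 : Type*) [DecidableEq n] [RCLike 𝕜]

def convexColumn (t : ℝ) : Matrix (n ⊕ n) n 𝕜 :=
  fromRows (√t • 1) (√(1 - t) • 1)

variable {n 𝕜} [Fintype n] {t : ℝ}

lemma conjTranspose_convexColumn_mul_fromBlocks_mul (ht₀ : 0 ≤ t) (ht₁ : t ≤ 1)
    (A B : Matrix n n 𝕜) :
    (convexColumn n 𝕜 t)ᴴ * fromBlocks A 0 0 B * convexColumn n 𝕜 t = t • A + (1 - t) • B := by
  rw [convexColumn, conjTranspose_fromRows_eq_fromCols_conjTranspose, Matrix.mul_assoc,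
    fromBlocks_mul_fromRows, fromCols_mul_fromRows]
  simp only [conjTranspose_smul, star_trivial, conjTranspose_one, Matrix.smul_mul,
    Matrix.mul_smul, Matrix.mul_one, Matrix.one_mul, smul_zero, add_zero, zero_add, smul_smul,
    Real.mul_self_sqrt ht₀, Real.mul_self_sqrt (sub_nonneg.2 ht₁)]

lemma conjTranspose_convexColumn_mul_self (ht₀ : 0 ≤ t) (ht₁ : t ≤ 1) :
    (convexColumn n 𝕜 t)ᴴ * convexColumn n 𝕜 t = 1 := by
  simpa [fromBlocks_one, ← add_smul] using
    conjTranspose_convexColumn_mul_fromBlocks_mul ht₀ ht₁ (1 : Matrix n n 𝕜) 1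

end ConvexColumn

section Pinching

variable {n p 𝕜 : Type*} [DecidableEq n] [Fintype p] [RCLike 𝕜]

def rangeReflection (α : Matrix n p 𝕜) : Matrix n n 𝕜 := 1 - (2 : 𝕜) • (α * αᴴ)

lemma isHermitian_rangeReflection (α : Matrix n p 𝕜) : (rangeReflection α).IsHermitian := by
  simp [rangeReflection, IsHermitian, conjTranspose_smul]

variable [Fintype n]

lemma IsHermitian.rangeReflection_mul_mul {x : Matrix n n 𝕜} (hx : x.IsHermitian)
    (α : Matrix n p 𝕜) : (rangeReflection α * x * rangeReflection α).IsHermitian := by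
  simpa only [(isHermitian_rangeReflection α).eq] using
    isHermitian_conjTranspose_mul_mul (rangeReflection α) hx

def pinching (α : Matrix n p 𝕜) (A : Matrix n n 𝕜) : Matrix n n 𝕜 :=
  (2⁻¹ : ℝ) • A + (2⁻¹ : ℝ) • (rangeReflection α * A * rangeReflection α)

lemma IsHermitian.pinching {x : Matrix n n 𝕜} (hx : x.IsHermitian) (α : Matrix n p 𝕜) :
    (pinching α x).IsHermitian :=
  (hx.smul (IsSelfAdjoint.all _)).add ((hx.rangeReflection_mul_mul α).smul (IsSelfAdjoint.all _))

variable [DecidableEq p] {α : Matrix n p 𝕜}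

lemma rangeReflection_mul (hα : αᴴ * α = 1) : rangeReflection α * α = -α := by
  rw [rangeReflection, Matrix.sub_mul, Matrix.smul_mul, Matrix.mul_assoc, hα, Matrix.mul_one,
    Matrix.one_mul]
  module

lemma conjTranspose_mul_rangeReflection (hα : αᴴ * α = 1) : αᴴ * rangeReflection α = -αᴴ := by
  simpa [(isHermitian_rangeReflection α).eq] using congrArg conjTranspose (rangeReflection_mul hα)

lemma rangeReflection_mul_self (hα : αᴴ * α = 1) : rangeReflection α * rangeReflection α = 1 := by
  conv_lhs => enter [1]; rw [rangeReflection]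
  rw [Matrix.sub_mul, Matrix.smul_mul, Matrix.mul_assoc, conjTranspose_mul_rangeReflection hα,
    Matrix.mul_neg, Matrix.one_mul, rangeReflection]
  module

lemma spectrum_rangeReflection_mul_mul (hα : αᴴ * α = 1) (x : Matrix n n 𝕜) :
    spectrum ℝ (rangeReflection α * x * rangeReflection α) = spectrum ℝ x :=
  spectrum.units_conjugate (u := ⟨_, _, rangeReflection_mul_self hα, rangeReflection_mul_self hα⟩)

lemma cfc_rangeReflection_mul_mul (f : ℝ → ℝ) (hα : αᴴ * α = 1) {x : Matrix n n 𝕜}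
    (hx : x.IsHermitian) :
    cfc f (rangeReflection α * x * rangeReflection α)
      = rangeReflection α * cfc f x * rangeReflection α := by
  have huu := rangeReflection_mul_self hα
  have h := cfc_mul_eq_mul_cfc_of_mul_eq f (hx.rangeReflection_mul_mul α) hx
    (α := rangeReflection α) (by rw [Matrix.mul_assoc, huu, Matrix.mul_one])
  rw [← h, Matrix.mul_assoc (cfc f _), huu, Matrix.mul_one]

lemma pinching_mul (hα : αᴴ * α = 1) (A : Matrix n n 𝕜) :
    pinching α A * α = α * (αᴴ * A * α) := by
  rw [pinching, Matrix.add_mul, Matrix.smul_mul, Matrix.smul_mul, Matrix.mul_assoc _ _ α,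
    rangeReflection_mul hα, rangeReflection, Matrix.mul_neg]
  simp only [Matrix.sub_mul, Matrix.smul_mul, Matrix.mul_assoc, Matrix.one_mul]
  module

lemma conjTranspose_mul_pinching_mul (hα : αᴴ * α = 1) (A : Matrix n n 𝕜) :
    αᴴ * pinching α A * α = αᴴ * A * α := by
  rw [Matrix.mul_assoc, pinching_mul hα, ← Matrix.mul_assoc, hα, Matrix.one_mul]

lemma conjTranspose_mul_cfc_pinching_mul (f : ℝ → ℝ) (hα : αᴴ * α = 1) {x : Matrix n n 𝕜}
    (hx : x.IsHermitian) : αᴴ * cfc f (pinching α x) * α = cfc f (αᴴ * x * α) :=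
  conjTranspose_mul_cfc_mul_of_mul_eq f (hx.pinching α) (isHermitian_conjTranspose_mul_mul α hx)
    hα (pinching_mul hα x)

end Pinching

end Matrix

lemma loewnerLe.conjTranspose_mul_mul {m l : ℕ} {A B : Matrix (Fin m) (Fin m) ℂ}
    (h : loewnerLe A B) (α : Matrix (Fin m) (Fin l) ℂ) :
    loewnerLe (αᴴ * A * α) (αᴴ * B * α) := by
  simpa only [loewnerLe, Matrix.mul_sub, Matrix.sub_mul] using h.conjTranspose_mul_mul_same α

theorem nc_convex_iff_operator_convex_general
    (c d : ℝ) (f : ℝ → ℝ) :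
    ((∀ (m l : ℕ) (x : Matrix (Fin m) (Fin m) ℂ), x.IsHermitian →
        spectrum ℝ x ⊆ Set.Icc c d →
        ∀ α : Matrix (Fin m) (Fin l) ℂ, αᴴ * α = 1 →
          loewnerLe (cfc f (αᴴ * x * α)) (αᴴ * cfc f x * α)) ↔
      (∀ (m : ℕ) (x y : Matrix (Fin m) (Fin m) ℂ), x.IsHermitian → y.IsHermitian →
        spectrum ℝ x ⊆ Set.Icc c d → spectrum ℝ y ⊆ Set.Icc c d →
        ∀ t : ℝ, 0 ≤ t → t ≤ 1 →
          loewnerLe (cfc f (t • x + (1 - t) • y))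
            (t • cfc f x + (1 - t) • cfc f y))) := by
  constructor
  · intro h m x y hx hy hsx hsy t ht₀ ht₁
    let e : Fin m ⊕ Fin m ≃ Fin (m + m) := finSumFinEquiv
    have hz : (fromBlocks x 0 0 y).IsHermitian := hx.fromBlocks (by simp) hy
    have hsz : spectrum ℝ (reindex e e (fromBlocks x 0 0 y)) ⊆ Set.Icc c d := by
      rw [spectrum_reindex]
      exact (spectrum_fromBlocks_zero_subset x y).trans (Set.union_subset hsx hsy)
    have hV : (reindex e (.refl _) (convexColumn (Fin m) ℂ t))ᴴ
        * reindex e (.refl _) (convexColumn (Fin m) ℂ t) = 1 := by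
      simpa using conjTranspose_convexColumn_mul_self (n := Fin m) (𝕜 := ℂ) ht₀ ht₁
    have hcompress := h (m + m) m _ (hz.reindex e) hsz _ hV
    rwa [cfc_reindex f e hz, conjTranspose_reindex_mul_reindex_mul_reindex,
      conjTranspose_reindex_mul_reindex_mul_reindex, cfc_fromBlocks_zero f hx hy,
      conjTranspose_convexColumn_mul_fromBlocks_mul ht₀ ht₁,
      conjTranspose_convexColumn_mul_fromBlocks_mul ht₀ ht₁] at hcompress
  · intro h m l x hx hsx α hα
    have hmid := h m x _ hx (hx.rangeReflection_mul_mul α) hsx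
      (by rwa [spectrum_rangeReflection_mul_mul hα]) 2⁻¹ (by norm_num) (by norm_num)
    rw [cfc_rangeReflection_mul_mul f hα hx, show (1 : ℝ) - 2⁻¹ = 2⁻¹ by norm_num] at hmid
    have hcompress := loewnerLe.conjTranspose_mul_mul (A := cfc f (pinching α x))
      (B := pinching α (cfc f x)) hmid α
    rwa [conjTranspose_mul_cfc_pinching_mul f hα hx, conjTranspose_mul_pinching_mul hα]
      at hcompress

/-- Let `I = [c,d] ⊆ ℝ` be a compact interval and let `K` be
the nc convex set whose level `m` consists of the self-adjoint `m × m` matrices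
with spectrum in `I`.  For a continuous real function `f` on `I`, applied to such
matrices by the continuous functional calculus, the resulting nc function is
convex in the nc sense — `f(α* x α) ≤ α* f(x) α` for all isometries `α`,
equivalently `f(λx + (1−λ)y) ≤ λ f(x) + (1−λ) f(y)` at every level — if and only
if `f` is operator convex on `I` (which is precisely the levelwise condition). -/
theorem nc_convex_iff_operator_convex
    (c d : ℝ) (hcd : c ≤ d) (f : ℝ → ℝ)
    (hf : ContinuousOn f (Set.Icc c d)) :
    ((∀ (m l : ℕ) (x : Matrix (Fin m) (Fin m) ℂ), x.IsHermitian →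
        spectrum ℝ x ⊆ Set.Icc c d →
        ∀ α : Matrix (Fin m) (Fin l) ℂ, αᴴ * α = 1 →
          loewnerLe (cfc f (αᴴ * x * α)) (αᴴ * cfc f x * α)) ↔
      (∀ (m : ℕ) (x y : Matrix (Fin m) (Fin m) ℂ), x.IsHermitian → y.IsHermitian →
        spectrum ℝ x ⊆ Set.Icc c d → spectrum ℝ y ⊆ Set.Icc c d →
        ∀ t : ℝ, 0 ≤ t → t ≤ 1 →
          loewnerLe (cfc f (t • x + (1 - t) • y))
            (t • cfc f x + (1 - t) • cfc f y))) :=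
  nc_convex_iff_operator_convex_general c d f
end
end

section
/- Let A be a separable unital C*-algebra with state space L₁ (a compact metrizable convex set in the weak* topology). Let (f_k) be a dense sequence in the self-adjoint part of a subspace, and for each k let ĝ_k : L₁ → ℝ be continuous affine and ǧ_k : L₁ → ℝ convex and lower semicontinuous with ǧ_k ≤ ĝ_k. Then the set Y = {μ ∈ L₁ : ĝ_k(μ) = ǧ_k(μ) for all k} is a Gδ subset of L₁, and if ρ is a regular Borel probability measure on L₁ with barycenter μ ∈ Y, then ρ(X) = 0 for each of the closed sets X_{km} = {ν : ĝ_k(ν) − ǧ_k(ν) ≥ 1/m}. -/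
/-!
Hahn–Banach separation of a point lying below the epigraph of a convex lower semicontinuous
function `g` produces continuous affine minorants of `g` whose value at any given point comes
arbitrarily close to `g` there. Integrating them against `ρ` gives Jensen's inequality
`ǧ_k(μ) ≤ ∫ ǧ_k dρ` at the barycenter, so `ĝ_k(μ) = ∫ ĝ_k dρ ≥ ∫ ǧ_k dρ ≥ ǧ_k(μ) = ĝ_k(μ)`.
Since `ǧ_k ≤ ĝ_k`, equality of the integrals forces `ǧ_k = ĝ_k` `ρ`-a.e., so every `X_{km}` is
null. The Gδ statement holds because `{ǧ_k - ĝ_k ≥ 0}` is the intersection of the open sets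
`{ǧ_k - ĝ_k > -1/(n+1)}`.
-/

open MeasureTheory Set Topology Filter

theorem LowerSemicontinuous.isGδ_preimage_Ici {X : Type*} [TopologicalSpace X] {f : X → ℝ}
    (hf : LowerSemicontinuous f) (c : ℝ) : IsGδ (f ⁻¹' Ici c) := by
  have hInter : f ⁻¹' Ici c = ⋂ n : ℕ, f ⁻¹' Ioi (c - 1 / (n + 1)) := by
    ext x
    simp only [mem_preimage, mem_Ici, mem_iInter, mem_Ioi]
    refine ⟨fun hx n => by linarith [Nat.one_div_pos_of_nat (α := ℝ) (n := n)], fun hx => ?_⟩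
    refine le_of_forall_pos_lt_add fun ε hε => ?_
    obtain ⟨n, hn⟩ := exists_nat_one_div_lt hε
    linarith [hx n]
  rw [hInter]
  exact .iInter fun n => (hf.isOpen_preimage _).isGδ

theorem isGδ_setOf_forall_eq {X ι : Type*} [TopologicalSpace X] [Countable ι] {f g : ι → X → ℝ}
    (hf : ∀ i, Continuous (f i)) (hg : ∀ i, LowerSemicontinuous (g i))
    (hgf : ∀ i x, g i x ≤ f i x) : IsGδ {x | ∀ i, f i x = g i x} := by
  have hInter : {x | ∀ i, f i x = g i x} = ⋂ i, (fun x => g i x + -f i x) ⁻¹' Ici 0 := by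
    ext x
    simp only [mem_ofPred_eq, mem_iInter, mem_preimage, mem_Ici]
    exact forall_congr' fun i => ⟨fun h => by linarith, fun h => by linarith [hgf i x]⟩
  rw [hInter]
  exact .iInter fun i => ((hg i).add (hf i).neg.lowerSemicontinuous).isGδ_preimage_Ici 0

theorem LowerSemicontinuous.integrable_of_le {X : Type*} [TopologicalSpace X] [CompactSpace X]
    [MeasurableSpace X] [OpensMeasurableSpace X] {ρ : Measure X} [IsFiniteMeasure ρ]
    {f g : X → ℝ} (hg : LowerSemicontinuous g) (hf : Continuous f) (hgf : ∀ x, g x ≤ f x) :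
    Integrable g ρ := by
  obtain ⟨C, hC⟩ := (hg.lowerSemicontinuousOn univ).bddBelow_of_isCompact isCompact_univ
  exact integrable_of_le_of_le hg.measurable.aestronglyMeasurable
    (.of_forall fun x => hC (mem_image_of_mem g (mem_univ x))) (.of_forall hgf)
    (integrable_const C) (hf.integrable_of_hasCompactSupport (.of_compactSpace f))

section SubtypeOfConvex

variable {V : Type*} {L : Set V}

def subtypeEpigraph (g : L → ℝ) : Set (V × ℝ) :=
  {p | ∃ x : L, (x : V) = p.1 ∧ g x ≤ p.2}

theorem mk_notMem_closure_subtypeEpigraph [TopologicalSpace V] {g : L → ℝ}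
    (hg : LowerSemicontinuous g) (x : L) {c : ℝ} (hc : c < g x) : ((x : V), c) ∉ closure (subtypeEpigraph g) := by
  obtain ⟨c', hcc', hc'⟩ := exists_between hc
  have hx : {y : L | c' < g y} ∈ comap Subtype.val (𝓝 (x : V)) := by
    rw [← nhds_subtype]
    exact hg x c' hc'
  obtain ⟨W, hW, hWg⟩ := hx
  rw [mem_closure_iff_nhds]
  intro h
  obtain ⟨⟨_, _⟩, ⟨hyW, hyc'⟩, y, rfl, hy⟩ := h _ (prod_mem_nhds hW (Iio_mem_nhds hcc'))
  exact (hWg hyW).not_ge (hy.trans (le_of_lt hyc'))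

variable [AddCommGroup V] [Module ℝ V]

def IsAffineOnSubtype (hL : Convex ℝ L) (a : L → ℝ) : Prop :=
  ∀ (x y : L) (t : ℝ) (ht : 0 ≤ t) (ht' : t ≤ 1),
    a ⟨t • (x : V) + (1 - t) • (y : V), hL x.2 y.2 ht (by linarith) (by ring)⟩ =
      t * a x + (1 - t) * a y

def IsConvexOnSubtype (hL : Convex ℝ L) (g : L → ℝ) : Prop :=
  ∀ (x y : L) (t : ℝ) (ht : 0 ≤ t) (ht' : t ≤ 1),
    g ⟨t • (x : V) + (1 - t) • (y : V), hL x.2 y.2 ht (by linarith) (by ring)⟩ ≤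
      t * g x + (1 - t) * g y

theorem convex_subtypeEpigraph {hL : Convex ℝ L} {g : L → ℝ} (hg : IsConvexOnSubtype hL g) :
    Convex ℝ (subtypeEpigraph g) := by
  rintro ⟨-, s⟩ ⟨x, rfl, hx⟩ ⟨-, t⟩ ⟨y, rfl, hy⟩ a b ha hb hab
  obtain rfl : b = 1 - a := by linarith
  refine ⟨⟨a • (x : V) + (1 - a) • (y : V), hL x.2 y.2 ha hb hab⟩, by simp, ?_⟩
  calc g _ ≤ a * g x + (1 - a) * g y := hg x y a ha (by linarith)
    _ ≤ a * s + (1 - a) * t := by gcongr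
    _ = _ := by simp

variable [TopologicalSpace V] [IsTopologicalAddGroup V] [ContinuousSMul ℝ V]
  [LocallyConvexSpace ℝ V]

theorem exists_continuous_affine_minorant {hL : Convex ℝ L} {g : L → ℝ}
    (hg_conv : IsConvexOnSubtype hL g) (hg_lsc : LowerSemicontinuous g) (x₀ : L) {c : ℝ}
    (hc : c < g x₀) :
    ∃ a : L → ℝ, Continuous a ∧ IsAffineOnSubtype hL a ∧ (∀ x, a x ≤ g x) ∧ c < a x₀ := by
  -- `L` need not be closed, so we separate from the closure of the epigraph.
  obtain ⟨f, u, hfx₀, hf⟩ := geometric_hahn_banach_point_closed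
    (convex_subtypeEpigraph hg_conv).closure isClosed_closure
    (mk_notMem_closure_subtypeEpigraph hg_lsc x₀ hc)
  set φ := f.comp (.inl ℝ V ℝ)
  set r := f (0, 1)
  have hf_apply (v : V) (t : ℝ) : f (v, t) = φ v + t * r := by
    have hvt : (v, t) = ((v, 0) : V × ℝ) + t • (0, 1) := by simp
    rw [hvt, map_add, map_smul, smul_eq_mul]
    rfl
  have hf_graph (x : L) : u < φ x + g x * r := by
    rw [← hf_apply]
    exact hf _ (subset_closure ⟨x, rfl, le_rfl⟩)
  rw [hf_apply] at hfx₀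
  have hr : 0 < r := by nlinarith [hf_graph x₀]
  refine ⟨fun x => (u - φ x) / r, by fun_prop, fun x y t _ _ => ?_,
    fun x => (div_le_iff₀ hr).2 (by linarith [hf_graph x]), (lt_div_iff₀ hr).2 (by linarith)⟩
  simp only [map_add, map_smul, smul_eq_mul]
  field_simp
  ring

variable [MeasurableSpace V]

def IsBarycenter (hL : Convex ℝ L) (ρ : Measure L) (μ : L) : Prop :=
  ∀ a : L → ℝ, Continuous a → IsAffineOnSubtype hL a → ∫ x, a x ∂ρ = a μ

variable [BorelSpace V] [CompactSpace L] {hL : Convex ℝ L} {ρ : Measure L} [IsFiniteMeasure ρ]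
  {μ : L}

theorem IsBarycenter.le_integral (hbar : IsBarycenter hL ρ μ) {g : L → ℝ}
    (hg_conv : IsConvexOnSubtype hL g) (hg_lsc : LowerSemicontinuous g) (hg : Integrable g ρ) :
    g μ ≤ ∫ x, g x ∂ρ := by
  refine le_of_forall_lt fun c hc => ?_
  obtain ⟨a, ha, ha_aff, hag, hca⟩ := exists_continuous_affine_minorant hg_conv hg_lsc μ hc
  calc c < a μ := hca
    _ = ∫ x, a x ∂ρ := (hbar a ha ha_aff).symm
    _ ≤ ∫ x, g x ∂ρ :=
      integral_mono (ha.integrable_of_hasCompactSupport (.of_compactSpace a)) hg hag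

theorem IsBarycenter.ae_eq_of_eq (hbar : IsBarycenter hL ρ μ) {f g : L → ℝ} (hf : Continuous f)
    (hf_aff : IsAffineOnSubtype hL f) (hg_conv : IsConvexOnSubtype hL g)
    (hg_lsc : LowerSemicontinuous g) (hgf : ∀ x, g x ≤ f x) (hμ : f μ = g μ) : g =ᵐ[ρ] f := by
  have hg_int : Integrable g ρ := hg_lsc.integrable_of_le hf hgf
  have hf_int : Integrable f ρ := hf.integrable_of_hasCompactSupport (.of_compactSpace f)
  refine (integral_eq_iff_of_ae_le hg_int hf_int (.of_forall hgf)).1 (le_antisymm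
    (integral_mono hg_int hf_int hgf) ?_)
  calc ∫ x, f x ∂ρ = g μ := (hbar f hf hf_aff).trans hμ
    _ ≤ ∫ x, g x ∂ρ := hbar.le_integral hg_conv hg_lsc hg_int

end SubtypeOfConvex

/-- Let `L₁` be the (compact convex) state space of a
separable unital C*-algebra, here abstracted as a compact convex subset `L` of a
locally convex space.  For each `k` let `ĝ_k : L → ℝ` be continuous and affine
and `ǧ_k : L → ℝ` be convex and lower semicontinuous with `ǧ_k ≤ ĝ_k`.  Then the
set `Y = {μ ∈ L : ĝ_k(μ) = ǧ_k(μ) for all k}` is a Gδ subset of `L`, and if `ρ`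
is a regular Borel probability measure on `L` with barycenter `μ ∈ Y`, then
`ρ(X_{km}) = 0` for each of the closed sets
`X_{km} = {ν : ĝ_k(ν) − ǧ_k(ν) ≥ 1/m}`. -/
theorem gdelta_and_null_sets_for_convex_envelope_discrepancy
    {V : Type*} [AddCommGroup V] [Module ℝ V] [TopologicalSpace V]
    [IsTopologicalAddGroup V] [ContinuousSMul ℝ V]
    [LocallyConvexSpace ℝ V] [MeasurableSpace V] [BorelSpace V]
    (L : Set V) (hLcomp : IsCompact L) (hLconv : Convex ℝ L)
    (hatg checkg : ℕ → (↥L → ℝ))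
    -- each `ĝ_k` is continuous and affine
    (hhatcont : ∀ k, Continuous (hatg k))
    (hhataff : ∀ k (x y : ↥L) (t : ℝ) (ht : 0 ≤ t) (ht' : t ≤ 1),
      hatg k ⟨t • (x : V) + (1 - t) • (y : V),
        hLconv x.2 y.2 ht (by linarith) (by ring)⟩ =
      t * hatg k x + (1 - t) * hatg k y)
    -- each `ǧ_k` is lower semicontinuous and convex, with `ǧ_k ≤ ĝ_k`
    (hchecklsc : ∀ k, LowerSemicontinuous (checkg k))
    (hcheckconv : ∀ k (x y : ↥L) (t : ℝ) (ht : 0 ≤ t) (ht' : t ≤ 1),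
      checkg k ⟨t • (x : V) + (1 - t) • (y : V),
        hLconv x.2 y.2 ht (by linarith) (by ring)⟩ ≤
      t * checkg k x + (1 - t) * checkg k y)
    (hle : ∀ k x, checkg k x ≤ hatg k x)
    -- a regular Borel probability measure `ρ` on `L` with barycenter `μ`
    (ρ : Measure ↥L) [IsProbabilityMeasure ρ]
    (μ : ↥L)
    (hbar : ∀ a : ↥L → ℝ, Continuous a →
      (∀ (x y : ↥L) (t : ℝ) (ht : 0 ≤ t) (ht' : t ≤ 1),
        a ⟨t • (x : V) + (1 - t) • (y : V),
          hLconv x.2 y.2 ht (by linarith) (by ring)⟩ =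
        t * a x + (1 - t) * a y) →
      ∫ x, a x ∂ρ = a μ)
    -- `μ` lies in `Y`
    (hμ : ∀ k, hatg k μ = checkg k μ) :
    IsGδ {ν : ↥L | ∀ k, hatg k ν = checkg k ν} ∧
    ∀ (k m : ℕ), 1 ≤ m →
      ρ {ν : ↥L | (1 : ℝ) / m ≤ hatg k ν - checkg k ν} = 0 := by
  have : CompactSpace L := isCompact_iff_compactSpace.mp hLcomp
  refine ⟨isGδ_setOf_forall_eq hhatcont hchecklsc hle, fun k m hm => ?_⟩
  have hae : checkg k =ᵐ[ρ] hatg k := IsBarycenter.ae_eq_of_eq (hL := hLconv) hbar (hhatcont k)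
    (hhataff k) (hcheckconv k) (hchecklsc k) (hle k) (hμ k)
  refine measure_mono_null (fun ν hν => ?_) (ae_iff.1 hae)
  intro heq
  rw [mem_ofPred_eq, heq, sub_self] at hν
  exact hν.not_gt (one_div_pos.2 (Nat.cast_pos.2 hm))
end
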